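/- arXiv:1305.6957 — 3 statements merged into one kernel-verified Lean document; each statement's English description precedes it below -/
import Mathlib

section
/- For every integer n ≥ 1, the open Waring rank of quadratic forms satisfies Ork(n, 2) = n. -/
/-!
Lower bound: with nothing forbidden, writing `F` as a sum of `m` powers of linear forms writes it
as a polynomial in `m` linear forms, so `m ≥ n` whenever `F` depends essentially on `n` variables,
as `∑ xᵢ²` does.

Upper bound: a quadratic form `F(a) = aᵀ M a` (with `M` symmetric) can be written in fewer
variables exactly when `M` is singular, so `F` is nondegenerate and `F(a) = |L₀ a|²` with `L₀`
invertible. Every `O L₀` with `Oᵀ O = 1` again gives `F = ∑ⱼ ((O L₀)ⱼ ⬝ a)²`. A proper homogeneous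
closed set lies in a hypersurface `p = 0`, and we need an orthogonal `O` none of whose rows lies on
the hypersurface `g(y) = p(yᵀ L₀) = 0`. Householder reflections `1 - 2xxᵀ/(xᵀx)` are a rational
family of orthogonal matrices; for each `j` one of them has its `j`-th row off the hypersurface,
so a generic one has all of its rows off it.
-/

open MvPolynomial

noncomputable section WaringSetup

variable {k : Type} [Field k] {n : ℕ}

/-- The linear form `∑ aᵢ xᵢ` with coefficient vector `a`. -/
def linForm (a : Fin n → k) : MvPolynomial (Fin n) k :=
  ∑ i, C (a i) * X i

/-- A subset of the space `S₁` of linear forms (identified with the space of coefficient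
vectors) is homogeneous Zariski closed if it is the common zero locus of a set of
homogeneous polynomial functions. -/
def HomZariskiClosed (V : Set (Fin n → k)) : Prop :=
  ∃ P : Set (MvPolynomial (Fin n) k),
    (∀ p ∈ P, ∃ e : ℕ, p.IsHomogeneous e) ∧
    V = {a | ∀ p ∈ P, eval a p = 0}

/-- `F` can be written as a polynomial in `m` linear forms. -/
def WritableIn (m : ℕ) (F : MvPolynomial (Fin n) k) : Prop :=
  ∃ y : Fin m → MvPolynomial (Fin n) k,
    (∀ j, (y j).IsHomogeneous 1) ∧ ∃ G : MvPolynomial (Fin m) k, F = aeval y G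

/-- `F` essentially depends on `n` variables: after any linear change of coordinates it
cannot be written using fewer than `n` variables. -/
def EssDep (F : MvPolynomial (Fin n) k) : Prop :=
  ∀ m : ℕ, m < n → ¬ WritableIn m F

/-- `OrkV d F V` is the minimal number `m` such that `F` is a sum of `m` `d`-th powers of
linear forms lying outside `V` (and `⊤` if there is no such presentation). -/
def OrkV (d : ℕ) (F : MvPolynomial (Fin n) k) (V : Set (Fin n → k)) : ℕ∞ :=
  sInf ((fun m : ℕ => (m : ℕ∞)) ''
    {m : ℕ | ∃ l : Fin m → (Fin n → k), (∀ i, l i ∉ V) ∧ F = ∑ i, linForm (l i) ^ d})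

/-- The open Waring rank of a form `F`: the supremum of `OrkV d F V` over all homogeneous
Zariski-closed proper subsets `V ⊊ S₁`. -/
def Ork (d : ℕ) (F : MvPolynomial (Fin n) k) : ℕ∞ :=
  ⨆ V : {V : Set (Fin n → k) // HomZariskiClosed V ∧ V ≠ Set.univ}, OrkV d F V.1

/-- The open Waring rank `Ork(n, d)`: the supremum of `Ork F` over all forms `F` of degree
`d` essentially depending on `n` variables. -/
def OrkND (k : Type) [Field k] (n d : ℕ) : ℕ∞ :=
  ⨆ F : {F : MvPolynomial (Fin n) k // F.IsHomogeneous d ∧ EssDep F}, Ork d F.1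

/-- Apply the constant-coefficient differential operator `D` (a polynomial, whose variable
`i` is read as `∂/∂xᵢ`) to the polynomial `F`. -/
def contract (D F : MvPolynomial (Fin n) k) : MvPolynomial (Fin n) k :=
  ∑ s ∈ D.support, D.coeff s •
    ((List.finRange n).foldr (fun i G => (fun H => pderiv i H)^[s i] G) F)

/-- Polynomial functions on the affine space of polynomials: the subalgebra of functions
generated by the coefficient functionals. -/
def PolyFun (n : ℕ) (k : Type) [Field k] : Subalgebra k (MvPolynomial (Fin n) k → k) :=
  Algebra.adjoin k (Set.range fun s : Fin n →₀ ℕ => fun F => coeff s F)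

end WaringSetup

open Matrix

namespace MvPolynomial

variable {σ k : Type*} [Field k]

lemma IsHomogeneous.eval_smul {p : MvPolynomial σ k} {e : ℕ} (hp : p.IsHomogeneous e)
    (c : k) (x : σ → k) : eval (c • x) p = c ^ e * eval x p := by
  rw [eval_eq, eval_eq, Finset.mul_sum]
  refine Finset.sum_congr rfl fun d hd => ?_
  have hdeg : ∑ i ∈ d.support, d i = e := by
    rw [← hp (mem_support_iff.mp hd), Finsupp.weight_apply, Finsupp.sum]
    simp
  simp only [Pi.smul_apply, smul_eq_mul, mul_pow, Finset.prod_mul_distrib,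
    Finset.prod_pow_eq_pow_sum, hdeg]
  ring

lemma eval_aeval {τ : Type*} (y : τ → k) (f : σ → MvPolynomial τ k) (p : MvPolynomial σ k) :
    eval y (aeval f p) = eval (fun i => eval y (f i)) p := by
  rw [aeval_eq_bind₁]
  exact eval₂Hom_bind₁ _ _ _ _

lemma exists_eval_ne_zero [Infinite k] {p : MvPolynomial σ k} (hp : p ≠ 0) :
    ∃ x, eval x p ≠ 0 := by
  by_contra! h
  exact hp (funext fun x => by simp [h x])

variable [Fintype σ]

lemma exists_isHomogeneous_eval_eq_eval_vecMul {p : MvPolynomial σ k} {e : ℕ}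
    (hp : p.IsHomogeneous e) (L : Matrix σ σ k) :
    ∃ g : MvPolynomial σ k, g.IsHomogeneous e ∧ ∀ y, eval y g = eval (y ᵥ* L) p := by
  refine ⟨aeval (fun i => ∑ t, C (L t i) * X t) p, ?_, fun y => ?_⟩
  · simpa using hp.aeval _ fun i =>
      IsHomogeneous.sum _ _ _ fun t _ => isHomogeneous_C_mul_X (L t i) t
  · have : (fun i => eval y (∑ t, C (L t i) * X t)) = y ᵥ* L := by
      funext i
      simp [vecMul, dotProduct, mul_comm]
    rw [eval_aeval, this]

variable [DecidableEq σ]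

lemma exists_eval_eq_dotProduct_of_isHomogeneous_one {y : MvPolynomial σ k}
    (hy : y.IsHomogeneous 1) : ∃ ℓ : σ → k, ∀ a, eval a y = ℓ ⬝ᵥ a := by
  replace hy : y ∈ Submodule.span k (Set.range X) := by
    rw [← homogeneousSubmodule_one_eq_span_X]; exact hy
  induction hy using Submodule.span_induction with
  | mem y hy =>
    obtain ⟨i, rfl⟩ := hy
    exact ⟨Pi.single i 1, fun a => by simp [single_dotProduct]⟩
  | zero => exact ⟨0, fun a => by simp⟩
  | add y z _ _ hy hz =>
    obtain ⟨ℓ, hℓ⟩ := hy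
    obtain ⟨ℓ', hℓ'⟩ := hz
    exact ⟨ℓ + ℓ', fun a => by simp [hℓ, hℓ', add_dotProduct]⟩
  | smul c y _ hy =>
    obtain ⟨ℓ, hℓ⟩ := hy
    exact ⟨c • ℓ, fun a => by simp [hℓ, smul_dotProduct]⟩

open scoped Pointwise in
lemma exists_matrix_eval_eq_dotProduct_mulVec {F : MvPolynomial σ k}
    (hF : F.IsHomogeneous 2) :
    ∃ M : Matrix σ σ k, ∀ a, eval a F = a ⬝ᵥ M *ᵥ a := by
  replace hF : F ∈ Submodule.span k (Set.range X * Set.range X : Set (MvPolynomial σ k)) := by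
    rw [← Submodule.span_mul_span, ← homogeneousSubmodule_one_eq_span_X, ← pow_two,
      homogeneousSubmodule_one_pow]
    exact hF
  induction hF using Submodule.span_induction with
  | mem F hF =>
    obtain ⟨_, ⟨i, rfl⟩, _, ⟨j, rfl⟩, rfl⟩ := hF
    exact ⟨Matrix.single i j 1, fun a => by
      simp [Matrix.single_mulVec, dotProduct, Function.update_apply]⟩
  | zero => exact ⟨0, fun a => by simp⟩
  | add F G _ _ hF hG =>
    obtain ⟨M, hM⟩ := hF
    obtain ⟨N, hN⟩ := hG
    exact ⟨M + N, fun a => by simp [hM, hN, add_mulVec, dotProduct_add]⟩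
  | smul c F _ hF =>
    obtain ⟨M, hM⟩ := hF
    exact ⟨c • M, fun a => by simp [hM, smul_mulVec, dotProduct_smul]⟩

lemma exists_isSymm_eval_eq_dotProduct_mulVec [NeZero (2 : k)] {F : MvPolynomial σ k}
    (hF : F.IsHomogeneous 2) :
    ∃ M : Matrix σ σ k, M.IsSymm ∧ ∀ a, eval a F = a ⬝ᵥ M *ᵥ a := by
  obtain ⟨M, hM⟩ := exists_matrix_eval_eq_dotProduct_mulVec hF
  refine ⟨(2⁻¹ : k) • (M + Mᵀ), ?_, fun a => ?_⟩
  · rw [IsSymm, transpose_smul, transpose_add, transpose_transpose, add_comm]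
  · have hMt : a ⬝ᵥ Mᵀ *ᵥ a = a ⬝ᵥ M *ᵥ a := by
      rw [mulVec_transpose, dotProduct_comm, ← dotProduct_mulVec]
    rw [smul_mulVec, add_mulVec, dotProduct_smul, dotProduct_add, hMt, hM, smul_eq_mul]
    field_simp
    ring

end MvPolynomial

namespace Matrix

variable {ι R : Type*} [Fintype ι] [CommRing R]

lemma dotProduct_transpose_mul_mulVec {κ : Type*} [Fintype κ] (A B : Matrix κ ι R)
    (v w : ι → R) : v ⬝ᵥ (Aᵀ * B) *ᵥ w = (A *ᵥ v) ⬝ᵥ (B *ᵥ w) := by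
  rw [← mulVec_mulVec, dotProduct_mulVec, vecMul_transpose]

lemma IsSymm.add_dotProduct_mulVec_add {M : Matrix ι ι R} (hM : M.IsSymm) (a v : ι → R) :
    (a + v) ⬝ᵥ M *ᵥ (a + v) = a ⬝ᵥ M *ᵥ a + 2 * (a ⬝ᵥ M *ᵥ v) + v ⬝ᵥ M *ᵥ v := by
  have hva : v ⬝ᵥ M *ᵥ a = a ⬝ᵥ M *ᵥ v := by
    rw [dotProduct_mulVec, ← mulVec_transpose, hM.eq, dotProduct_comm]
  simp only [mulVec_add, add_dotProduct, dotProduct_add, hva]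
  ring

lemma IsSymm.forall_add_smul_iff {K : Type*} [Field K] [NeZero (2 : K)] {M : Matrix ι ι K}
    (hM : M.IsSymm) (v : ι → K) :
    (∀ a (c : K), (a + c • v) ⬝ᵥ M *ᵥ (a + c • v) = a ⬝ᵥ M *ᵥ a) ↔ M *ᵥ v = 0 := by
  refine ⟨fun h => ?_, fun hv a c => ?_⟩
  · have hvv : v ⬝ᵥ M *ᵥ v = 0 := by simpa using h 0 1
    refine dotProduct_eq_zero _ fun a => ?_
    have := h a 1
    rw [one_smul, hM.add_dotProduct_mulVec_add, hvv] at this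
    have h2 : 2 * (a ⬝ᵥ M *ᵥ v) = 0 := by linear_combination this
    rw [dotProduct_comm]
    exact (mul_eq_zero.1 h2).resolve_left two_ne_zero
  · rw [hM.add_dotProduct_mulVec_add, mulVec_smul, hv, smul_zero, dotProduct_zero,
      dotProduct_zero]
    ring

variable [DecidableEq ι]

lemma IsSymm.exists_eq_transpose_mul_self {K : Type*} [Field K] [IsAlgClosed K]
    [NeZero (2 : K)] {M : Matrix ι ι K} (hM : M.IsSymm) : ∃ L : Matrix ι ι K, M = Lᵀ * L := by
  have : Invertible (2 : K) := invertibleOfNonzero two_ne_zero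
  set B := Matrix.toBilin (Pi.basisFun K ι) M
  obtain ⟨v, hv⟩ := LinearMap.BilinForm.exists_orthogonal_basis (B := B)
    (LinearMap.BilinForm.isSymm_iff.1 ((isSymm_toBilin_iff_isSymm (Pi.basisFun K ι)).2 hM))
  let e := Fintype.equivFinOfCardEq (Module.finrank_fintype_fun_eq_card K (η := ι)).symm
  let w := v.reindex e.symm
  choose s hs using fun i => IsAlgClosed.exists_pow_nat_eq (B (w i) (w i)) two_pos
  have hD : LinearMap.BilinForm.toMatrix w B = diagonal s * diagonal s := by
    ext i j
    rw [LinearMap.BilinForm.toMatrix_apply, diagonal_mul_diagonal, diagonal_apply]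
    split_ifs with hij
    · rw [hij, ← hs, sq]
    · rw [Module.Basis.reindex_apply, Module.Basis.reindex_apply, Equiv.symm_symm]
      exact hv (e.injective.ne hij)
  refine ⟨diagonal s * w.toMatrix (Pi.basisFun K ι), ?_⟩
  rw [transpose_mul, diagonal_transpose, Matrix.mul_assoc, ← Matrix.mul_assoc (diagonal s), ← hD,
    ← Matrix.mul_assoc, LinearMap.BilinForm.toMatrix_mul_basis_toMatrix,
    LinearMap.BilinForm.toMatrix_toBilin]

/-- The Householder reflection in `x⊥`, scaled by `x ⬝ᵥ x` so that it is polynomial in `x`. -/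
def scaledReflection (x : ι → R) : Matrix ι ι R :=
  (x ⬝ᵥ x) • 1 - (2 : R) • vecMulVec x x

lemma transpose_scaledReflection (x : ι → R) : (scaledReflection x)ᵀ = scaledReflection x := by
  simp [scaledReflection, transpose_vecMulVec]

lemma scaledReflection_mul_self (x : ι → R) :
    scaledReflection x * scaledReflection x = (x ⬝ᵥ x) ^ 2 • 1 := by
  simp only [scaledReflection, sub_mul, mul_sub, Matrix.one_mul, Matrix.mul_one,
    smul_mul_assoc, mul_smul_comm, vecMulVec_mul_vecMulVec, vecMulVec_smul, smul_smul]
  module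

lemma scaledReflection_single_sub_apply {K : Type*} [Field K] {u : ι → K} (hu : u ⬝ᵥ u = 1)
    (j : ι) : scaledReflection (Pi.single j 1 - u) j = (2 * (1 - u j)) • u := by
  have hq : (Pi.single j 1 - u) ⬝ᵥ (Pi.single j 1 - u) = 2 * (1 - u j) := by
    simp only [sub_dotProduct, dotProduct_sub, single_dotProduct, dotProduct_single, hu,
      Pi.sub_apply, Pi.single_eq_same, mul_one, one_mul]
    ring
  funext i
  simp only [scaledReflection, hq, sub_apply, smul_apply, one_apply, vecMulVec_apply,
    Pi.sub_apply, Pi.single_apply, Pi.smul_apply, smul_eq_mul]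
  by_cases h : i = j
  · subst h
    simp only [↓reduceIte, mul_one]
    ring
  · simp only [Ne.symm h, ↓reduceIte, mul_zero, h, zero_sub, mul_neg, sub_neg_eq_add, zero_add]
    ring

end Matrix

namespace MvPolynomial

variable {σ k : Type*} [Fintype σ] [Field k]

lemma eval_dotProduct_X (x : σ → k) : eval x ((X : σ → MvPolynomial σ k) ⬝ᵥ X) = x ⬝ᵥ x := by
  simp [dotProduct]

variable [DecidableEq σ]

lemma dotProduct_X_ne_zero [Nonempty σ] : (X : σ → MvPolynomial σ k) ⬝ᵥ X ≠ 0 := by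
  obtain ⟨j⟩ := ‹Nonempty σ›
  intro h
  have := congrArg (eval (Pi.single j (1 : k))) h
  rw [eval_dotProduct_X, map_zero, single_dotProduct] at this
  simp at this

lemma eval_scaledReflection_X (x : σ → k) (i j : σ) :
    eval x (scaledReflection (X : σ → MvPolynomial σ k) i j) = scaledReflection x i j := by
  simp only [scaledReflection, dotProduct, Matrix.sub_apply, Matrix.smul_apply, one_apply,
    smul_eq_mul, mul_ite, mul_one, mul_zero, vecMulVec_apply, map_sub, map_mul, eval_ofNat, eval_X,
    sub_left_inj]
  split_ifs <;> simp

variable [IsAlgClosed k] [NeZero (2 : k)]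

lemma IsHomogeneous.exists_dotProduct_self_eq_one_eval_ne_zero {g : MvPolynomial σ k} {e : ℕ}
    (hg : g.IsHomogeneous e) (hg0 : g ≠ 0) (j : σ) :
    ∃ u : σ → k, u ⬝ᵥ u = 1 ∧ u j ≠ 1 ∧ eval u g ≠ 0 := by
  have : Nonempty σ := ⟨j⟩
  obtain ⟨z, hz⟩ := exists_eval_ne_zero (mul_ne_zero hg0 dotProduct_X_ne_zero)
  rw [map_mul, eval_dotProduct_X, mul_ne_zero_iff] at hz
  obtain ⟨s, hs⟩ := IsAlgClosed.exists_pow_nat_eq (z ⬝ᵥ z) two_pos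
  have hs0 : s ≠ 0 := by
    rintro rfl
    exact hz.2 (by rw [← hs]; ring)
  -- rescale `z` to a unit vector, choosing the sign so that its `j`-th entry is not 1
  obtain ⟨c, hc, hcj⟩ : ∃ c : k, c ^ 2 * (z ⬝ᵥ z) = 1 ∧ c * z j ≠ 1 := by
    by_cases h : s⁻¹ * z j = 1
    · refine ⟨-s⁻¹, by rw [← hs]; field_simp, ?_⟩
      rw [neg_mul, h]
      intro h1
      exact two_ne_zero (by linear_combination -h1 : (2 : k) = 0)
    · exact ⟨s⁻¹, by rw [← hs]; field_simp, h⟩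
  have hc0 : c ≠ 0 := by
    rintro rfl
    simp at hc
  refine ⟨c • z, ?_, hcj, ?_⟩
  · rw [smul_dotProduct, dotProduct_smul, smul_smul, smul_eq_mul, ← hc]
    ring
  · rw [hg.eval_smul]
    exact mul_ne_zero (pow_ne_zero _ hc0) hz.1

theorem IsHomogeneous.exists_orthogonal_eval_row_ne_zero {g : MvPolynomial σ k} {e : ℕ}
    (hg : g.IsHomogeneous e) (hg0 : g ≠ 0) :
    ∃ O : Matrix σ σ k, Oᵀ * O = 1 ∧ ∀ j, eval (O j) g ≠ 0 := by
  cases isEmpty_or_nonempty σ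
  · exact ⟨1, by simp, isEmptyElim⟩
  let Q : σ → MvPolynomial σ k := fun j => MvPolynomial.aeval (scaledReflection X j) g
  have hQ : ∀ x j, eval x (Q j) = eval (scaledReflection x j) g := fun x j => by
    rw [eval_aeval]
    exact congrArg (eval · g) (_root_.funext (eval_scaledReflection_X x j))
  -- the reflection exchanging `e_j` and the unit vector `u` has `u` as its `j`-th row
  have hQ0 : ∀ j, Q j ≠ 0 := by
    intro j hQj
    obtain ⟨u, hu, huj, hgu⟩ := hg.exists_dotProduct_self_eq_one_eval_ne_zero hg0 j
    have := hQ (Pi.single j 1 - u) j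
    rw [hQj, map_zero, scaledReflection_single_sub_apply hu, hg.eval_smul] at this
    exact mul_ne_zero (pow_ne_zero _ (mul_ne_zero two_ne_zero (sub_ne_zero.2 huj.symm))) hgu
      this.symm
  have hprod : X ⬝ᵥ X * ∏ j, Q j ≠ 0 :=
    mul_ne_zero dotProduct_X_ne_zero (Finset.prod_ne_zero_iff.2 fun j _ => hQ0 j)
  obtain ⟨x, hx⟩ := exists_eval_ne_zero hprod
  rw [map_mul, map_prod, eval_dotProduct_X, mul_ne_zero_iff, Finset.prod_ne_zero_iff] at hx
  obtain ⟨hxx, hQx⟩ := hx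
  refine ⟨(x ⬝ᵥ x)⁻¹ • scaledReflection x, ?_, fun j => ?_⟩
  · rw [transpose_smul, transpose_scaledReflection, smul_mul_smul, scaledReflection_mul_self,
      smul_smul, show (x ⬝ᵥ x)⁻¹ * (x ⬝ᵥ x)⁻¹ * (x ⬝ᵥ x) ^ 2 = 1 by field_simp, one_smul]
  · change eval ((x ⬝ᵥ x)⁻¹ • scaledReflection x j) g ≠ 0
    rw [hg.eval_smul, ← hQ]
    exact mul_ne_zero (pow_ne_zero _ (inv_ne_zero hxx)) (hQx j (Finset.mem_univ j))

end MvPolynomial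

section EssentialDependence

variable {k : Type} [Field k] {n m : ℕ}

lemma WritableIn.exists_eval_add_smul_eq {F : MvPolynomial (Fin n) k} (hF : WritableIn m F)
    (hm : m < n) : ∃ v ≠ 0, ∀ a (c : k), eval (a + c • v) F = eval a F := by
  obtain ⟨y, hy, G, rfl⟩ := hF
  choose ℓ hℓ using fun j => exists_eval_eq_dotProduct_of_isHomogeneous_one (hy j)
  obtain ⟨v, hv, hv0⟩ := Submodule.exists_mem_ne_zero_of_ne_bot
    (LinearMap.ker_ne_bot_of_finrank_lt (f := (Matrix.of ℓ).mulVecLin) (by simpa using hm))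
  refine ⟨v, hv0, fun a c => ?_⟩
  have hℓv : ∀ j, ℓ j ⬝ᵥ v = 0 := fun j => congrFun hv j
  simp only [eval_aeval, hℓ, dotProduct_add, dotProduct_smul, hℓv, smul_zero, add_zero]

lemma writableIn_of_eval_add_smul_eq [Infinite k] {F : MvPolynomial (Fin (m + 1)) k}
    {v : Fin (m + 1) → k} (hv : v ≠ 0) (hF : ∀ a (c : k), eval (a + c • v) F = eval a F) :
    WritableIn m F := by
  obtain ⟨i, hi⟩ : ∃ i, v i ≠ 0 := Function.ne_iff.1 hv
  -- the projection onto the hyperplane `xᵢ = 0` along `v`, in the coordinates of that hyperplane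
  refine ⟨fun j => X (i.succAbove j) - C (v (i.succAbove j) / v i) * X i,
    fun j => (isHomogeneous_X k _).sub (isHomogeneous_C_mul_X _ _),
    MvPolynomial.aeval (i.insertNth 0 X) F, MvPolynomial.funext fun a => ?_⟩
  rw [eval_aeval, eval_aeval, ← hF a (-(a i / v i))]
  refine congrArg (eval · F) (_root_.funext fun t => ?_)
  cases t using i.succAboveCases with
  | x => simp [field]
  | p j =>
    simp only [Fin.insertNth_apply_succAbove, eval_X, map_sub, map_mul, eval_C, Pi.add_apply,
      Pi.smul_apply, smul_eq_mul]
    ring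

theorem essDep_iff_isUnit [Infinite k] [NeZero (2 : k)] {F : MvPolynomial (Fin n) k}
    {M : Matrix (Fin n) (Fin n) k} (hM : M.IsSymm) (hF : ∀ a, eval a F = a ⬝ᵥ M *ᵥ a) :
    EssDep F ↔ IsUnit M := by
  have hker : ∀ v, (∀ a (c : k), eval (a + c • v) F = eval a F) ↔ M *ᵥ v = 0 := fun v => by
    simpa only [hF] using hM.forall_add_smul_iff v
  refine ⟨fun hE => ?_, fun hMu m hm hW => ?_⟩
  · by_contra hMu
    rw [isUnit_iff_isUnit_det, isUnit_iff_ne_zero, not_not, ← exists_mulVec_eq_zero_iff] at hMu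
    obtain ⟨v, hv0, hv⟩ := hMu
    cases n with
    | zero => exact hv0 (Subsingleton.elim _ _)
    | succ m => exact hE m m.lt_succ_self (writableIn_of_eval_add_smul_eq hv0 ((hker v).2 hv))
  · obtain ⟨v, hv0, hv⟩ := hW.exists_eval_add_smul_eq hm
    exact hv0 (mulVec_injective_iff_isUnit.2 hMu (((hker v).1 hv).trans (mulVec_zero M).symm))

end EssentialDependence

section OpenWaringRank

variable {k : Type} [Field k] {n : ℕ}

lemma eval_linForm (a l : Fin n → k) : eval a (linForm l) = l ⬝ᵥ a := by
  simp [linForm, dotProduct]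

lemma isHomogeneous_linForm (l : Fin n → k) : (linForm l).IsHomogeneous 1 :=
  IsHomogeneous.sum _ _ _ fun i _ => isHomogeneous_C_mul_X (l i) i

lemma eval_sum_linForm_sq {m : ℕ} (L : Matrix (Fin m) (Fin n) k) (a : Fin n → k) :
    eval a (∑ j, linForm (L j) ^ 2) = (L *ᵥ a) ⬝ᵥ (L *ᵥ a) := by
  simp [eval_linForm, dotProduct, mulVec, sq]

lemma le_orkV_of_essDep {F : MvPolynomial (Fin n) k} (hE : EssDep F) (d : ℕ)
    (V : Set (Fin n → k)) : (n : ℕ∞) ≤ OrkV d F V := by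
  refine le_sInf ?_
  rintro _ ⟨m, ⟨l, -, hFl⟩, rfl⟩
  by_contra! hm
  refine hE m (by exact_mod_cast hm) ⟨fun i => linForm (l i), fun i => isHomogeneous_linForm _,
    ∑ i, X i ^ d, ?_⟩
  simp [hFl]

lemma homZariskiClosed_empty : HomZariskiClosed (∅ : Set (Fin n → k)) :=
  ⟨{1}, by simpa using ⟨0, isHomogeneous_one _ _⟩, by simp⟩

lemma le_ork_of_essDep {F : MvPolynomial (Fin n) k} (hE : EssDep F) (d : ℕ) :
    (n : ℕ∞) ≤ Ork d F :=
  le_iSup_of_le ⟨∅, homZariskiClosed_empty, Set.empty_ne_univ⟩ (le_orkV_of_essDep hE d ∅)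

lemma HomZariskiClosed.exists_isHomogeneous_ne_zero {V : Set (Fin n → k)}
    (hV : HomZariskiClosed V) (hVne : V ≠ Set.univ) :
    ∃ p : MvPolynomial (Fin n) k, ∃ e, p.IsHomogeneous e ∧ p ≠ 0 ∧ ∀ a ∈ V, eval a p = 0 := by
  obtain ⟨P, hP, rfl⟩ := hV
  obtain ⟨a, ha⟩ := (Set.ne_univ_iff_exists_notMem _).1 hVne
  simp only [Set.mem_ofPred_eq, not_forall] at ha
  obtain ⟨p, hpP, hpa⟩ := ha
  obtain ⟨e, hp⟩ := hP p hpP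
  exact ⟨p, e, hp, fun h => hpa (by simp [h]), fun b hb => hb p hpP⟩

lemma isHomogeneous_sum_X_sq : (∑ i, X i ^ 2 : MvPolynomial (Fin n) k).IsHomogeneous 2 :=
  IsHomogeneous.sum _ _ _ fun i _ => isHomogeneous_X_pow i 2

lemma essDep_sum_X_sq [Infinite k] [NeZero (2 : k)] :
    EssDep (∑ i, X i ^ 2 : MvPolynomial (Fin n) k) :=
  (essDep_iff_isUnit isSymm_one fun a => by simp [dotProduct, sq]).2 isUnit_one

variable [IsAlgClosed k] [NeZero (2 : k)]

theorem exists_sum_linForm_sq_eval_ne_zero {F : MvPolynomial (Fin n) k}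
    (hF : F.IsHomogeneous 2) (hE : EssDep F) {p : MvPolynomial (Fin n) k} {e : ℕ}
    (hp : p.IsHomogeneous e) (hp0 : p ≠ 0) :
    ∃ L : Matrix (Fin n) (Fin n) k, (∀ j, eval (L j) p ≠ 0) ∧ F = ∑ j, linForm (L j) ^ 2 := by
  obtain ⟨M, hMs, hFM⟩ := exists_isSymm_eval_eq_dotProduct_mulVec hF
  have hMu := (essDep_iff_isUnit hMs hFM).1 hE
  obtain ⟨L₀, rfl⟩ := hMs.exists_eq_transpose_mul_self
  have hL₀ : IsUnit L₀ := by
    rw [isUnit_iff_isUnit_det, det_mul, det_transpose, IsUnit.mul_iff] at hMu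
    exact (isUnit_iff_isUnit_det _).2 hMu.1
  obtain ⟨g, hg, hgp⟩ := exists_isHomogeneous_eval_eq_eval_vecMul hp L₀
  have hg0 : g ≠ 0 := by
    rintro rfl
    obtain ⟨a, ha⟩ := exists_eval_ne_zero hp0
    obtain ⟨y, rfl⟩ := vecMul_surjective_iff_isUnit.2 hL₀ a
    simp [← hgp] at ha
  obtain ⟨O, hO, hOg⟩ := hg.exists_orthogonal_eval_row_ne_zero hg0
  refine ⟨O * L₀, fun j => ?_, MvPolynomial.funext fun a => ?_⟩
  · change eval (O j ᵥ* L₀) p ≠ 0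
    rw [← hgp]
    exact hOg j
  · rw [eval_sum_linForm_sq, hFM, dotProduct_transpose_mul_mulVec, ← mulVec_mulVec,
      ← dotProduct_transpose_mul_mulVec O O, hO, one_mulVec]

theorem orkV_two_le_of_essDep {F : MvPolynomial (Fin n) k} (hF : F.IsHomogeneous 2)
    (hE : EssDep F) {V : Set (Fin n → k)} (hV : HomZariskiClosed V) (hVne : V ≠ Set.univ) :
    OrkV 2 F V ≤ n := by
  obtain ⟨p, e, hp, hp0, hpV⟩ := hV.exists_isHomogeneous_ne_zero hVne
  obtain ⟨L, hLp, hFL⟩ := exists_sum_linForm_sq_eval_ne_zero hF hE hp hp0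
  exact sInf_le ⟨n, ⟨L, fun j hj => hLp j (hpV _ hj), hFL⟩, rfl⟩

end OpenWaringRank

theorem stmt_2_general (k : Type) [Field k] [IsAlgClosed k] [CharZero k]
    (n : ℕ) :
    OrkND k n 2 = (n : ℕ∞) := by
  refine le_antisymm (iSup_le fun F => iSup_le fun V => ?_) ?_
  · exact orkV_two_le_of_essDep F.2.1 F.2.2 V.2.1 V.2.2
  · calc (n : ℕ∞) ≤ Ork 2 (∑ i, X i ^ 2 : MvPolynomial (Fin n) k) :=
          le_ork_of_essDep essDep_sum_X_sq 2
      _ ≤ OrkND k n 2 :=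
          le_iSup (fun F : {F : MvPolynomial (Fin n) k // F.IsHomogeneous 2 ∧ EssDep F} =>
            Ork 2 F.1) ⟨_, isHomogeneous_sum_X_sq, essDep_sum_X_sq⟩

/-- For every integer `n ≥ 1`, the open Waring rank of quadratic forms satisfies
`Ork(n, 2) = n`. -/
theorem stmt_2 (k : Type) [Field k] [IsAlgClosed k] [CharZero k]
    (n : ℕ) (hn : 1 ≤ n) :
    OrkND k n 2 = (n : ℕ∞) :=
  stmt_2_general k n
end

section
/- For every integer d ≥ 2, the classical Waring rank of the binary form x_1^{d-1} x_2 is exactly d; in particular, x_1^{d-1} x_2 cannot be written as a sum of fewer than d d-th powers of linear forms. -/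
open MvPolynomial

/-!
Write the linear forms as `lᵢ = aᵢ x₁ + bᵢ x₂` and put `pₜ = ∑ᵢ aᵢ^(d-t) bᵢ^t`. Comparing
coefficients, `x₁^(d-1) x₂ = ∑ᵢ lᵢ^d` says exactly that `(d choose t) pₜ = [t = 1]` for `t ≤ d`.

With `ζ` a primitive `d`-th root of unity, the `d` forms `lⱼ` with
`lⱼ^d = d⁻² ζ^(-j) (x₁ + ζ^j x₂)^d` satisfy these conditions, by orthogonality of the powers of `ζ`.

Conversely, given fewer than `d` forms, let `N` be the number of `bₜ ≠ 0`. The degree-`d` form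
`g = x₂ x₁^(d-1-N) ∏_{bₜ ≠ 0} (bₜ x₁ - aₜ x₂)` vanishes at every `(aᵢ, bᵢ)`, so
`∑ᵢ g(aᵢ, bᵢ) = 0`. Expanding `g` in monomials, every monomial other than `x₁^(d-1) x₂` is paired
with a vanishing moment, so the same sum equals `(∏ bₜ) p₁ ≠ 0`.
-/

lemma IsPrimitiveRoot.sum_range_pow_mul {k : Type} [Field k] {ζ : k} {d : ℕ}
    (hζ : IsPrimitiveRoot ζ d) (r : ℕ) :
    ∑ j ∈ Finset.range d, ζ ^ (j * r) = if d ∣ r then (d : k) else 0 := by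
  simp_rw [mul_comm _ r, pow_mul]
  split_ifs with hr
  · simp [(hζ.pow_eq_one_iff_dvd r).2 hr]
  · rw [geom_sum_eq (mt (hζ.pow_eq_one_iff_dvd r).1 hr), ← pow_mul, mul_comm, pow_mul,
      hζ.pow_eq_one, one_pow, sub_self, zero_div]

section BinaryForms

variable {k : Type} [Field k]

noncomputable def binaryExponent (d t : ℕ) : Fin 2 →₀ ℕ :=
  Finsupp.single 0 (d - t) + Finsupp.single 1 t

lemma binaryExponent_apply_one (d t : ℕ) : binaryExponent d t 1 = t := by
  simp [binaryExponent]

lemma binaryExponent_injective (d : ℕ) : Function.Injective (binaryExponent d) := fun s t h => by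
  simpa only [binaryExponent_apply_one] using DFunLike.congr_fun h 1

lemma coeff_sum_monomial_binaryExponent {d j : ℕ} (hj : j ≤ d) (c : ℕ → k) :
    coeff (binaryExponent d j) (∑ t ∈ Finset.range (d + 1), monomial (binaryExponent d t) (c t))
      = c j := by
  classical
  simp only [coeff_sum, coeff_monomial, (binaryExponent_injective d).eq_iff]
  rw [Finset.sum_ite_eq', if_pos (Finset.mem_range_succ_iff.2 hj)]

lemma linForm_pow_two (x : Fin 2 → k) (d : ℕ) :
    linForm x ^ d = ∑ t ∈ Finset.range (d + 1),
      monomial (binaryExponent d t) (d.choose t * (x 0 ^ (d - t) * x 1 ^ t)) := by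
  rw [linForm, Fin.sum_univ_two, add_comm, add_pow]
  refine Finset.sum_congr rfl fun t _ => ?_
  simp only [binaryExponent, mul_pow, ← C_pow, X_pow_eq_monomial, C_mul_monomial, monomial_mul]
  rw [← map_natCast (C : k →+* MvPolynomial (Fin 2) k), mul_comm, C_mul_monomial, add_comm]
  ring_nf

variable {ι : Type} [Fintype ι]

def powerSum (l : ι → Fin 2 → k) (d t : ℕ) : k :=
  ∑ i, l i 0 ^ (d - t) * l i 1 ^ t

lemma sum_linForm_pow_two (l : ι → Fin 2 → k) (d : ℕ) :
    ∑ i, linForm (l i) ^ d = ∑ t ∈ Finset.range (d + 1),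
      monomial (binaryExponent d t) (d.choose t * powerSum l d t) := by
  simp only [linForm_pow_two, powerSum, Finset.mul_sum, map_sum]
  exact Finset.sum_comm

lemma X_pow_mul_X_eq_monomial (d : ℕ) :
    (X 0 : MvPolynomial (Fin 2) k) ^ (d - 1) * X 1 = monomial (binaryExponent d 1) 1 := by
  rw [binaryExponent, ← mul_one (1 : k), ← monomial_mul, ← X_pow_eq_monomial, ← X]

lemma X_pow_mul_X_eq_sum_linForm_pow_iff {d : ℕ} (hd : 1 ≤ d) (l : ι → Fin 2 → k) :
    (X 0 : MvPolynomial (Fin 2) k) ^ (d - 1) * X 1 = ∑ i, linForm (l i) ^ d ↔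
      ∀ t ≤ d, d.choose t * powerSum l d t = if t = 1 then 1 else 0 := by
  have hX : (X 0 : MvPolynomial (Fin 2) k) ^ (d - 1) * X 1 = ∑ t ∈ Finset.range (d + 1),
      monomial (binaryExponent d t) (if t = 1 then 1 else 0) := by
    simp only [apply_ite (monomial _), map_zero, Finset.sum_ite_eq',
      Finset.mem_range.2 (Nat.lt_succ_of_le hd), if_true, X_pow_mul_X_eq_monomial]
  rw [hX, sum_linForm_pow_two]
  refine ⟨fun h t ht => ?_, fun h => Finset.sum_congr rfl fun t ht => ?_⟩
  · simpa only [coeff_sum_monomial_binaryExponent ht] using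
      (congrArg (coeff (binaryExponent d t)) h).symm
  · rw [h t (Finset.mem_range_succ_iff.1 ht)]

lemma MvPolynomial.IsHomogeneous.add_eq_of_mem_support_fin_two {h : MvPolynomial (Fin 2) k}
    {N : ℕ} (hh : h.IsHomogeneous N) {ν : Fin 2 →₀ ℕ} (hν : ν ∈ h.support) : ν 0 + ν 1 = N := by
  simpa [Finsupp.weight_apply, Finsupp.sum_fintype, Fin.sum_univ_two] using
    hh (mem_support_iff.1 hν)

lemma MvPolynomial.IsHomogeneous.eval_fin_two {h : MvPolynomial (Fin 2) k} {N : ℕ}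
    (hh : h.IsHomogeneous N) (x : Fin 2 → k) :
    eval x h = ∑ ν ∈ h.support, coeff ν h * (x 0 ^ (N - ν 1) * x 1 ^ ν 1) := by
  rw [eval_eq']
  refine Finset.sum_congr rfl fun ν hν => ?_
  rw [Fin.prod_univ_two, ← hh.add_eq_of_mem_support_fin_two hν, Nat.add_sub_cancel]

lemma powerSum_one_eq_zero {d : ℕ} {l : ι → Fin 2 → k} (hcard : Fintype.card ι < d)
    (hvanish : ∀ t, 2 ≤ t → t ≤ d → powerSum l d t = 0) : powerSum l d 1 = 0 := by
  classical
  set s := Finset.univ.filter fun i => l i 1 ≠ 0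
  set N := s.card
  have hN : N < d := (Finset.card_le_univ s).trans_lt hcard
  set h : MvPolynomial (Fin 2) k := ∏ t ∈ s, (C (l t 1) * X 0 - C (l t 0) * X 1)
  have hh : h.IsHomogeneous N := by
    simpa using IsHomogeneous.prod s _ (fun _ => 1) fun t _ =>
      (isHomogeneous_C_mul_X (l t 1) 0).sub (isHomogeneous_C_mul_X (l t 0) 1)
  have hzero : ∀ i, l i 1 * l i 0 ^ (d - 1 - N) * eval (l i) h = 0 := by
    intro i
    by_cases hi : l i 1 = 0
    · rw [hi, zero_mul, zero_mul]
    · rw [eval_prod, Finset.prod_eq_zero (Finset.mem_filter.2 ⟨Finset.mem_univ i, hi⟩)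
        (by simp [mul_comm]), mul_zero]
  have hh10 : eval ![1, 0] h = ∏ t ∈ s, l t 1 := by simp [h]
  have key : ∑ i, l i 1 * l i 0 ^ (d - 1 - N) * eval (l i) h = eval ![1, 0] h * powerSum l d 1 :=
    calc ∑ i, l i 1 * l i 0 ^ (d - 1 - N) * eval (l i) h
        = ∑ ν ∈ h.support, coeff ν h * powerSum l d (ν 1 + 1) := by
          simp only [hh.eval_fin_two, Finset.mul_sum, powerSum]
          rw [Finset.sum_comm]
          refine Finset.sum_congr rfl fun ν hν => Finset.sum_congr rfl fun i _ => ?_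
          have hνN := hh.add_eq_of_mem_support_fin_two hν
          rw [show d - (ν 1 + 1) = (d - 1 - N) + (N - ν 1) by omega]
          ring
      _ = ∑ ν ∈ h.support, coeff ν h * (1 ^ (N - ν 1) * 0 ^ ν 1) * powerSum l d 1 := by
          refine Finset.sum_congr rfl fun ν hν => ?_
          have hνN := hh.add_eq_of_mem_support_fin_two hν
          rcases Nat.eq_zero_or_pos (ν 1) with hν1 | hν1
          · simp [hν1]
          · rw [hvanish _ (by omega) (by omega), zero_pow hν1.ne']
            ring
      _ = eval ![1, 0] h * powerSum l d 1 := by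
          simp [hh.eval_fin_two, Finset.sum_mul]
  rw [Fintype.sum_eq_zero _ hzero, hh10] at key
  exact (mul_eq_zero.1 key.symm).resolve_left
    (Finset.prod_ne_zero_iff.2 fun t ht => (Finset.mem_filter.1 ht).2)

lemma exists_sum_linForm_pow_eq_X_pow_mul_X [IsAlgClosed k] [CharZero k] {d : ℕ} (hd : 2 ≤ d) :
    ∃ l : Fin d → Fin 2 → k, (X 0 : MvPolynomial (Fin 2) k) ^ (d - 1) * X 1 =
      ∑ i, linForm (l i) ^ d := by
  have hd0 : (d : k) ≠ 0 := Nat.cast_ne_zero.2 (by omega)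
  have : NeZero (d : k) := ⟨hd0⟩
  obtain ⟨ζ, hζ⟩ := HasEnoughRootsOfUnity.exists_primitiveRoot k d
  choose c hc using fun j : Fin d =>
    IsAlgClosed.exists_pow_nat_eq (ζ ^ ((j : ℕ) * (d - 1)) / d ^ 2) (by omega : 0 < d)
  refine ⟨fun j => ![c j, c j * ζ ^ (j : ℕ)], (X_pow_mul_X_eq_sum_linForm_pow_iff (by omega) _).2
    fun t ht => ?_⟩
  have hpow : powerSum (fun j => ![c j, c j * ζ ^ (j : ℕ)]) d t
      = (∑ j ∈ Finset.range d, ζ ^ (j * (d - 1 + t))) / d ^ 2 := by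
    rw [powerSum, ← Fin.sum_univ_eq_sum_range (fun j => ζ ^ (j * (d - 1 + t))), Finset.sum_div]
    refine Finset.sum_congr rfl fun j _ => ?_
    simp only [Matrix.cons_val_zero, Matrix.cons_val_one]
    rw [mul_pow, ← mul_assoc, ← pow_add, Nat.sub_add_cancel ht, hc, Nat.mul_add, pow_add,
      ← pow_mul]
    ring
  have hdvd : d ∣ d - 1 + t ↔ t = 1 := by
    refine ⟨fun ⟨q, hq⟩ => ?_, fun h => ⟨1, by omega⟩⟩
    rcases q with _ | _ | q
    · omega
    · omega
    · rw [show d * (q + 1 + 1) = d * q + 2 * d by ring] at hq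
      omega
  rw [hpow, hζ.sum_range_pow_mul]
  split_ifs with h1 h2 h2
  · rw [h2, Nat.choose_one_right]
    field_simp
  · exact absurd (hdvd.1 h1) h2
  · exact absurd (hdvd.2 h2) h1
  · simp

lemma X_pow_mul_X_ne_sum_linForm_pow [CharZero k] {d : ℕ} (hcard : Fintype.card ι < d) (l : ι → Fin 2 → k) :
    (X 0 : MvPolynomial (Fin 2) k) ^ (d - 1) * X 1 ≠ ∑ i, linForm (l i) ^ d := by
  intro h
  have hcoeff := (X_pow_mul_X_eq_sum_linForm_pow_iff (by omega) l).1 h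
  have hvanish : ∀ t, 2 ≤ t → t ≤ d → powerSum l d t = 0 := fun t h2 ht => by
    simpa [show t ≠ 1 by omega, (Nat.choose_pos ht).ne'] using hcoeff t ht
  have hone : (d : k) * powerSum l d 1 = 1 := by simpa using hcoeff 1 (by omega)
  rw [powerSum_one_eq_zero hcard hvanish, mul_zero] at hone
  exact zero_ne_one hone

end BinaryForms

/-- For every `d ≥ 2`, the classical Waring rank of `x₁^(d-1) x₂` is exactly `d`:
`d` is the least number of `d`-th powers of linear forms summing to it. -/
theorem stmt_9 (k : Type) [Field k] [IsAlgClosed k] [CharZero k]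
    (d : ℕ) (hd : 2 ≤ d) :
    IsLeast {m : ℕ | ∃ l : Fin m → (Fin 2 → k),
      (X 0 : MvPolynomial (Fin 2) k) ^ (d - 1) * X 1 = ∑ i, linForm (l i) ^ d} d :=
  ⟨exists_sum_linForm_pow_eq_X_pow_mul_X hd, fun m ⟨l, hl⟩ =>
    not_lt.1 fun hm => X_pow_mul_X_ne_sum_linForm_pow (by simpa using hm) l hl⟩
end

section
/- Let F ∈ S_d and suppose ⋂_{i=1}^k m_i ⊆ F^⊥, where m_1,…,m_k are the homogeneous ideals in S* of k distinct points [l_1],…,[l_k] of the projective space P(S_1). Then F lies in the linear span of l_1^d, l_2^d, …, l_k^d. -/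
open MvPolynomial

/-!
The apolar pairing `⟨D, G⟩ := contract D G` on forms of degree `d` is perfect in characteristic
zero: in the monomial basis it is diagonal, `⟨xˢ, xᵗ⟩ = s! δₛₜ`, so every linear functional `φ` on
forms is represented on degree `d` by an operator `D_φ`. Moreover
`⟨D, l^d⟩ = d! · D(a)` for `l = ∑ aᵢ xᵢ`. If `F` were outside the span of the `lᵢ^d`, take `φ`
vanishing on the span with `φ F ≠ 0`: then `D_φ` vanishes at every `aᵢ`, so it annihilates `F` by
hypothesis, i.e. `φ F = 0`.
-/

noncomputable section Apolarity

variable {k : Type} [Field k] {n : ℕ}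

def pderivPowList (s : Fin n →₀ ℕ) (L : List (Fin n)) : Module.End k (MvPolynomial (Fin n) k) :=
  L.foldr (fun i f => (pderiv i).toLinearMap ^ s i * f) 1

/-- The operator `∂ˢ = ∏ᵢ (∂/∂xᵢ)^sᵢ`, composed in the order used by `contract`. -/
def pderivPow (s : Fin n →₀ ℕ) : Module.End k (MvPolynomial (Fin n) k) :=
  pderivPowList s (List.finRange n)

lemma pderivPowList_apply (s : Fin n →₀ ℕ) (L : List (Fin n)) (F : MvPolynomial (Fin n) k) :
    pderivPowList s L F
      = L.foldr (fun i G => (fun H : MvPolynomial (Fin n) k => pderiv i H)^[s i] G) F := by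
  induction L with
  | nil => rfl
  | cons i L ih =>
    rw [pderivPowList, List.foldr_cons, Module.End.mul_apply, ← pderivPowList, ih,
      Module.End.pow_apply, Derivation.coeFn_coe, List.foldr_cons]

lemma contract_eq_sum_pderivPow (D F : MvPolynomial (Fin n) k) :
    contract D F = ∑ s ∈ D.support, D.coeff s • pderivPow s F := by
  simp only [contract, pderivPow, pderivPowList_apply]

lemma contract_eq_sum_of_support_subset {D : MvPolynomial (Fin n) k}
    {S : Finset (Fin n →₀ ℕ)} (hS : D.support ⊆ S) (F : MvPolynomial (Fin n) k) :
    contract D F = ∑ s ∈ S, D.coeff s • pderivPow s F := by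
  rw [contract_eq_sum_pderivPow]
  exact Finset.sum_subset hS fun s _ hs => by rw [notMem_support_iff.mp hs, zero_smul]

lemma pderiv_pow_monomial (i : Fin n) (m : ℕ) (t : Fin n →₀ ℕ) (e : k) :
    ((pderiv i).toLinearMap ^ m) (monomial t e)
      = monomial (t - Finsupp.single i m) (e * (t i).descFactorial m) := by
  rw [Module.End.pow_apply, Derivation.coeFn_coe]
  induction m with
  | zero => simp
  | succ m ih =>
    rw [Function.iterate_succ_apply', ih, pderiv_monomial, tsub_tsub, ← Finsupp.single_add,
      Finsupp.tsub_apply, Finsupp.single_eq_same, Nat.descFactorial_succ, Nat.cast_mul]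
    ring_nf

lemma pderivPowList_monomial (s : Fin n →₀ ℕ) {L : List (Fin n)} (hL : L.Nodup)
    (t : Fin n →₀ ℕ) (e : k) :
    pderivPowList s L (monomial t e)
      = monomial (t - ∑ i ∈ L.toFinset, Finsupp.single i (s i))
          (e * ∏ i ∈ L.toFinset, ((t i).descFactorial (s i) : k)) := by
  induction L with
  | nil => simp [pderivPowList]
  | cons i L ih =>
    obtain ⟨hi, hL⟩ := List.nodup_cons.mp hL
    have hiL : i ∉ L.toFinset := by simpa using hi
    have hti : (t - ∑ j ∈ L.toFinset, Finsupp.single j (s j)) i = t i := by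
      simp [Finsupp.single_apply, hiL]
    rw [pderivPowList, List.foldr_cons, Module.End.mul_apply, ← pderivPowList, ih hL,
      pderiv_pow_monomial, hti, List.toFinset_cons, Finset.sum_insert hiL,
      Finset.prod_insert hiL, tsub_tsub, add_comm]
    ring_nf

lemma pderivPow_monomial (s t : Fin n →₀ ℕ) (e : k) :
    pderivPow s (monomial t e) = monomial (t - s) (e * ∏ i, ((t i).descFactorial (s i) : k)) := by
  rw [pderivPow, pderivPowList_monomial s (List.nodup_finRange n), List.toFinset_finRange,
    Finsupp.univ_sum_single s]

lemma exists_lt_of_degree_eq {s t : Fin n →₀ ℕ} (hts : t ≠ s) (hdeg : t.degree = s.degree) :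
    ∃ i, t i < s i := by
  by_contra! h
  obtain ⟨u, rfl⟩ := le_iff_exists_add.mp (show s ≤ t from fun i => h i)
  rw [map_add, add_eq_left, Finsupp.degree_eq_zero_iff] at hdeg
  simp [hdeg] at hts

lemma degree_eq_of_mem_support {d : ℕ} {G : MvPolynomial (Fin n) k} (hG : G.IsHomogeneous d)
    {t : Fin n →₀ ℕ} (ht : t ∈ G.support) : t.degree = d := by
  by_contra h
  exact mem_support_iff.mp ht (hG.coeff_eq_zero h)

lemma pderivPow_eq_C_of_isHomogeneous {d : ℕ} {s : Fin n →₀ ℕ} (hs : s.degree = d)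
    {G : MvPolynomial (Fin n) k} (hG : G.IsHomogeneous d) :
    pderivPow s G = C ((∏ i, ((s i).factorial : k)) * G.coeff s) := by
  have hterm : ∀ t ∈ G.support, pderivPow s (monomial t (G.coeff t))
      = if t = s then C ((∏ i, ((s i).factorial : k)) * G.coeff s) else 0 := by
    intro t ht
    rw [pderivPow_monomial]
    split_ifs with hts
    · subst hts
      simp [Nat.descFactorial_self, mul_comm]
    · obtain ⟨i, hi⟩ := exists_lt_of_degree_eq hts (by rw [hs, degree_eq_of_mem_support hG ht])
      have hzero : ((t i).descFactorial (s i) : k) = 0 := by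
        simp [Nat.descFactorial_eq_zero_iff_lt.mpr hi]
      rw [Finset.prod_eq_zero (Finset.mem_univ i) hzero, mul_zero, monomial_zero]
  conv_lhs => rw [G.as_sum, map_sum]
  rw [Finset.sum_congr rfl hterm, Finset.sum_ite_eq' G.support s]
  split_ifs with hs
  · rfl
  · simp [notMem_support_iff.mp hs]

lemma pderiv_linForm (a : Fin n → k) (i : Fin n) : pderiv i (linForm a) = C (a i) := by
  simp [linForm, pderiv_X, Pi.single_apply]

lemma pderiv_pow_linForm_pow (a : Fin n → k) (i : Fin n) (m q : ℕ) :
    ((pderiv i).toLinearMap ^ q) (linForm a ^ m)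
      = ((m.descFactorial q : k) * a i ^ q) • linForm a ^ (m - q) := by
  induction q with
  | zero => simp
  | succ q ih =>
    rw [pow_succ', Module.End.mul_apply, ih, map_smul, Derivation.coeFn_coe, pderiv_pow,
      pderiv_linForm, show m - q - 1 = m - (q + 1) by omega, Nat.descFactorial_succ,
      smul_eq_C_mul, smul_eq_C_mul]
    simp only [map_mul, map_pow, map_natCast, Nat.cast_mul]
    ring

lemma pderivPowList_linForm_pow (a : Fin n → k) (s : Fin n →₀ ℕ) {L : List (Fin n)}
    (hL : L.Nodup) (m : ℕ) :
    pderivPowList s L (linForm a ^ m)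
      = ((m.descFactorial (∑ i ∈ L.toFinset, s i) : k) * ∏ i ∈ L.toFinset, a i ^ s i) •
          linForm a ^ (m - ∑ i ∈ L.toFinset, s i) := by
  induction L with
  | nil => simp [pderivPowList]
  | cons i L ih =>
    obtain ⟨hi, hL⟩ := List.nodup_cons.mp hL
    have hiL : i ∉ L.toFinset := by simpa using hi
    have hdesc (S : ℕ) :
        m.descFactorial (s i + S) = (m - S).descFactorial (s i) * m.descFactorial S := by
      rw [← Nat.descFactorial_mul_descFactorial (Nat.le_add_left S (s i)), Nat.add_sub_cancel]
    rw [pderivPowList, List.foldr_cons, Module.End.mul_apply, ← pderivPowList, ih hL, map_smul,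
      pderiv_pow_linForm_pow, smul_smul, List.toFinset_cons, Finset.sum_insert hiL,
      Finset.prod_insert hiL, hdesc, tsub_tsub, add_comm (s i), Nat.cast_mul]
    ring_nf

lemma pderivPow_linForm_pow (a : Fin n → k) {d : ℕ} {s : Fin n →₀ ℕ} (hs : s.degree = d) :
    pderivPow s (linForm a ^ d) = C ((d.factorial : k) * ∏ i, a i ^ s i) := by
  rw [Finsupp.degree_eq_sum] at hs
  rw [pderivPow, pderivPowList_linForm_pow a s (List.nodup_finRange n), List.toFinset_finRange,
    hs, Nat.descFactorial_self, Nat.sub_self, pow_zero, smul_eq_C_mul, mul_one]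

lemma contract_linForm_pow (a : Fin n → k) {d : ℕ} {D : MvPolynomial (Fin n) k}
    (hD : D.IsHomogeneous d) :
    contract D (linForm a ^ d) = C ((d.factorial : k) * eval a D) := by
  rw [contract_eq_sum_pderivPow, eval_eq', Finset.mul_sum, map_sum]
  refine Finset.sum_congr rfl fun s hs => ?_
  rw [pderivPow_linForm_pow a (degree_eq_of_mem_support hD hs), smul_eq_C_mul, ← C_mul]
  ring_nf

lemma isHomogeneous_linForm_pow (a : Fin n → k) (d : ℕ) : (linForm a ^ d).IsHomogeneous d := by
  have h : (linForm a).IsHomogeneous 1 :=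
    IsHomogeneous.sum _ _ 1 fun i _ => isHomogeneous_C_mul_X (a i) i
  simpa using h.pow d

lemma mem_finsuppAntidiag_univ {d : ℕ} {s : Fin n →₀ ℕ} :
    s ∈ Finset.univ.finsuppAntidiag d ↔ s.degree = d := by
  simp [Finsupp.degree_eq_sum]

/-- The operator representing the functional `φ` on forms of degree `d` under the apolar
pairing, the dual basis of `xˢ` being `∂ˢ / s!`. -/
def apolarDual (d : ℕ) (φ : Module.Dual k (MvPolynomial (Fin n) k)) : MvPolynomial (Fin n) k :=
  ∑ s ∈ Finset.univ.finsuppAntidiag d, monomial s (φ (monomial s 1) / ∏ i, ((s i).factorial : k))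

variable (d : ℕ) (φ : Module.Dual k (MvPolynomial (Fin n) k))

lemma isHomogeneous_apolarDual : (apolarDual d φ).IsHomogeneous d :=
  IsHomogeneous.sum _ _ _ fun _ hs => isHomogeneous_monomial _ (mem_finsuppAntidiag_univ.mp hs)

lemma coeff_apolarDual {s : Fin n →₀ ℕ} (hs : s.degree = d) :
    (apolarDual d φ).coeff s = φ (monomial s 1) / ∏ i, ((s i).factorial : k) := by
  simp [apolarDual, coeff_sum, coeff_monomial, mem_finsuppAntidiag_univ.mpr hs]

lemma contract_apolarDual [CharZero k] {G : MvPolynomial (Fin n) k} (hG : G.IsHomogeneous d) :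
    contract (apolarDual d φ) G = C (φ G) := by
  have hsupp : ∀ {H : MvPolynomial (Fin n) k}, H.IsHomogeneous d →
      H.support ⊆ Finset.univ.finsuppAntidiag d :=
    fun hH _ ht => mem_finsuppAntidiag_univ.mpr (degree_eq_of_mem_support hH ht)
  have hG_sum : G = ∑ s ∈ Finset.univ.finsuppAntidiag d, monomial s (G.coeff s) :=
    G.as_sum.trans <| Finset.sum_subset (hsupp hG) fun s _ hs => by
      rw [notMem_support_iff.mp hs, monomial_zero]
  rw [contract_eq_sum_of_support_subset (hsupp (isHomogeneous_apolarDual d φ))]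
  conv_rhs => rw [hG_sum, map_sum, map_sum]
  refine Finset.sum_congr rfl fun s hs => ?_
  have hs := mem_finsuppAntidiag_univ.mp hs
  have hfact : ∏ i, ((s i).factorial : k) ≠ 0 :=
    Finset.prod_ne_zero_iff.mpr fun i _ => Nat.cast_ne_zero.mpr (Nat.factorial_ne_zero _)
  have hmonomial : monomial s (G.coeff s) = G.coeff s • monomial s (1 : k) := by
    rw [smul_monomial, smul_eq_mul, mul_one]
  rw [coeff_apolarDual d φ hs, pderivPow_eq_C_of_isHomogeneous hs hG, hmonomial, map_smul,
    smul_eq_C_mul, ← C_mul, smul_eq_mul]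
  field_simp

lemma factorial_mul_eval_apolarDual [CharZero k] (a : Fin n → k) :
    (d.factorial : k) * eval a (apolarDual d φ) = φ (linForm a ^ d) :=
  C_injective (Fin n) k <| by
    rw [← contract_linForm_pow a (isHomogeneous_apolarDual d φ),
      contract_apolarDual d φ (isHomogeneous_linForm_pow a d)]

end Apolarity

theorem stmt_10_general (k : Type) [Field k] [CharZero k]
    (n d : ℕ) (F : MvPolynomial (Fin n) k) (hF : F.IsHomogeneous d)
    (r : ℕ) (a : Fin r → (Fin n → k))
    (hann : ∀ D : MvPolynomial (Fin n) k,
      (∀ i, ∀ e : ℕ, eval (a i) (homogeneousComponent e D) = 0) → contract D F = 0) :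
    F ∈ Submodule.span k (Set.range fun i => linForm (a i) ^ d) := by
  by_contra hFW
  obtain ⟨φ, hφF, hφW⟩ := Submodule.exists_dual_map_eq_bot_of_notMem hFW inferInstance
  have hD := isHomogeneous_apolarDual d φ
  have hvanish (i : Fin r) : eval (a i) (apolarDual d φ) = 0 := by
    have hφi : φ (linForm (a i) ^ d) = 0 := by
      have hmem : linForm (a i) ^ d ∈ Submodule.span k (Set.range fun i => linForm (a i) ^ d) :=
        Submodule.subset_span ⟨i, rfl⟩
      simpa [hφW] using Submodule.mem_map_of_mem (f := φ) hmem
    rw [← factorial_mul_eval_apolarDual, mul_eq_zero] at hφi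
    exact hφi.resolve_left (Nat.cast_ne_zero.mpr d.factorial_ne_zero)
  have hcontract := hann (apolarDual d φ) fun i e => by
    rw [homogeneousComponent_of_mem hD]
    split_ifs
    exacts [hvanish i, map_zero _]
  rw [contract_apolarDual d φ hF, C_eq_zero] at hcontract
  exact hφF hcontract

/-- Apolarity lemma: if the intersection of the homogeneous ideals of `r` distinct points
`[l₁], …, [l_r]` of `ℙ(S₁)` is contained in `F^⊥`, then `F` lies in the linear span of
`l₁^d, …, l_r^d`. -/
theorem stmt_10 (k : Type) [Field k] [IsAlgClosed k] [CharZero k]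
    (n d : ℕ) (F : MvPolynomial (Fin n) k) (hF : F.IsHomogeneous d)
    (r : ℕ) (a : Fin r → (Fin n → k)) (ha : ∀ i, a i ≠ 0)
    (hdistinct : ∀ i j, i ≠ j → ∀ c : k, a i ≠ c • a j)
    (hann : ∀ D : MvPolynomial (Fin n) k,
      (∀ i, ∀ e : ℕ, eval (a i) (homogeneousComponent e D) = 0) → contract D F = 0) :
    F ∈ Submodule.span k (Set.range fun i => linForm (a i) ^ d) :=
  stmt_10_general k n d F hF r a hann
end
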